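/- For every q ∈ (0, 1], s(q) = δ_r(1, q, q), i.e., Florian's bound equals the density of a packing of one disk of radius 1 and two disks of radius q, mutually tangent, inside the triangle formed by their centers. -/

import Mathlib

open Real

/-- Florian's bound. -/
noncomputable def florianS (q : ℝ) : ℝ :=
  (π * q ^ 2 + 2 * (1 - q ^ 2) * arcsin (q / (1 + q))) / (2 * q * Real.sqrt (1 + 2 * q))

/-- Inradius of the triangle of centers of three mutually externally tangent circles. -/
noncomputable def inradiusR (r₁ r₂ r₃ : ℝ) : ℝ := Real.sqrt (r₁ * r₂ * r₃ / (r₁ + r₂ + r₃))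

/-- Area of that triangle (Heron's formula). -/
noncomputable def triAreaR (r₁ r₂ r₃ : ℝ) : ℝ := Real.sqrt (r₁ * r₂ * r₃ * (r₁ + r₂ + r₃))

/-- Density of the three circles inside the triangle of their centers. -/
noncomputable def deltaR (r₁ r₂ r₃ : ℝ) : ℝ :=
  ((π / 2 - arctan (r₁ / inradiusR r₁ r₂ r₃)) * r₁ ^ 2 +
      (π / 2 - arctan (r₂ / inradiusR r₁ r₂ r₃)) * r₂ ^ 2 +
      (π / 2 - arctan (r₃ / inradiusR r₁ r₂ r₃)) * r₃ ^ 2) / triAreaR r₁ r₂ r₃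

/-!
For radii `1, q, q` the triangle of centers is isosceles with inradius `q / s` and area `q s`,
where `s = √(1 + 2q)`. Each term `π/2 - arctan (rᵢ / R)` of `deltaR` is half the angle of the
triangle at the centre of radius `rᵢ`; the angle at the unit circle is `2 arcsin (q / (1 + q))`,
which turns the arcsine of Florian's bound into `arctan (q / s)`, and the angle sum `π` gives
`arctan (q / s) + 2 arctan s⁻¹ = π / 2`. With these two facts both sides are the same rational
expression in `q`, `s`, `π` and `arctan (q / s)`.
-/

theorem inradiusR_one_self {q : ℝ} (hq : 0 ≤ q) :
    inradiusR 1 q q = q / √(1 + 2 * q) := by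
  rw [inradiusR, show (1 : ℝ) * q * q / (1 + q + q) = q ^ 2 / (1 + 2 * q) by ring,
    sqrt_div (sq_nonneg q), sqrt_sq hq]

theorem triAreaR_one_self {q : ℝ} (hq : 0 ≤ q) :
    triAreaR 1 q q = q * √(1 + 2 * q) := by
  rw [triAreaR, show (1 : ℝ) * q * q * (1 + q + q) = q ^ 2 * (1 + 2 * q) by ring,
    sqrt_mul (sq_nonneg q), sqrt_sq hq]

theorem arcsin_div_one_add {q : ℝ} (hq : 0 < 1 + 2 * q) :
    arcsin (q / (1 + q)) = arctan (q / √(1 + 2 * q)) := by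
  have h1q : 0 < 1 + q := by linarith
  have hmem : q / (1 + q) ∈ Set.Ioo (-1 : ℝ) 1 := by
    constructor
    · rw [lt_div_iff₀ h1q]; linarith
    · rw [div_lt_one h1q]; linarith
  have hcos : 1 - (q / (1 + q)) ^ 2 = (1 + 2 * q) / (1 + q) ^ 2 := by
    field_simp; ring
  rw [arcsin_eq_arctan hmem, hcos, sqrt_div' _ (sq_nonneg _), sqrt_sq h1q.le,
    div_div_div_cancel_right₀ h1q.ne']

theorem arctan_div_sqrt_add_two_mul_arctan_inv_sqrt {q : ℝ} (hq : 0 < 1 + 2 * q) :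
    arctan (q / √(1 + 2 * q)) + 2 * arctan (√(1 + 2 * q))⁻¹ = π / 2 := by
  set s := √(1 + 2 * q)
  have hs : 0 < s := sqrt_pos.mpr hq
  have hs2 : s ^ 2 = 1 + 2 * q := sq_sqrt hq.le
  have hprod : q / s * s⁻¹ = q / (1 + 2 * q) := by rw [← hs2]; ring
  have hprod_lt : q / s * s⁻¹ < 1 := by
    rw [hprod, div_lt_one hq]; linarith
  -- the tangent addition formula: `arctan (q / s) + arctan s⁻¹ = arctan s`
  have hsum : (q / s + s⁻¹) / (1 - q / s * s⁻¹) = s := by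
    have hden : 1 - q / s * s⁻¹ = (1 + q) / s ^ 2 := by
      rw [hprod, hs2, one_sub_div hq.ne']; ring
    have h1q : 1 + q ≠ 0 := by linarith
    rw [hden, div_div_eq_mul_div]
    field_simp [h1q]
    ring
  have hadd := arctan_add hprod_lt
  rw [hsum] at hadd
  linarith [arctan_inv_of_pos hs]

theorem florian_eq_deltaR (q : ℝ) (hq : q ∈ Set.Ioc (0 : ℝ) 1) :
    florianS q = deltaR 1 q q := by
  have hq0 : 0 < q := hq.1
  have h2q : 0 < 1 + 2 * q := by linarith
  have hs : 0 < √(1 + 2 * q) := sqrt_pos.mpr h2q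
  have key := arctan_div_sqrt_add_two_mul_arctan_inv_sqrt h2q
  set s := √(1 + 2 * q)
  have half_angle_one : π / 2 - arctan (1 / (q / s)) = arctan (q / s) := by
    rw [one_div, arctan_inv_of_pos (div_pos hq0 hs)]; ring
  have half_angle_q : π / 2 - arctan (q / (q / s)) = arctan s⁻¹ := by
    rw [div_div_cancel₀ hq0.ne', arctan_inv_of_pos hs]
  rw [florianS, deltaR, inradiusR_one_self hq0.le, triAreaR_one_self hq0.le,
    arcsin_div_one_add h2q, half_angle_one, half_angle_q,
    div_eq_div_iff (by positivity) (by positivity)]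
  linear_combination (-2 * q ^ 3 * s) * key
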